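/- arXiv:2108.03213 — 3 statements merged into one kernel-verified Lean document; each statement's English description precedes it below -/
import Mathlib

section
/- Let S and O be finite nonempty sets and let (r₁,p₁) and (r₂,p₂) be two SMDP models over (S,O) (rewards rᵢ : S × O → ℝ, nonnegative kernels pᵢ : S × O × S → ℝ) with γ̄₂ := max_{s,o} ∑_{s'} p₂(s,o,s') < 1. Let Q₁ and Q₂ be Bellman-optimal value functions for (r₁,p₁) and (r₂,p₂) respectively. Then ‖Q₁ − Q₂‖_∞ ≤ (1 − γ̄₂)⁻¹ · ( ‖r₁ − r₂‖_∞ + κ · ‖Q₁‖_∞ ), where κ := max_{s,o} ∑_{s'} |p₁(s,o,s') − p₂(s,o,s')| and ‖·‖_∞ denotes the maximum absolute value over the finite domain. -/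
/-!
Subtracting the two Bellman equations splits `Q₁ - Q₂` into the reward error, the transition
error acting on the greedy values of `Q₁` (at most `κ ‖Q₁‖∞`), and `p₂` acting on the difference
of greedy values (at most `γ̄₂ ‖Q₁ - Q₂‖∞`, since taking a maximum is 1-Lipschitz for `‖·‖∞`).
Hence `‖Q₁ - Q₂‖∞ ≤ ‖r₁ - r₂‖∞ + κ ‖Q₁‖∞ + γ̄₂ ‖Q₁ - Q₂‖∞`, and `γ̄₂ < 1` lets one solve for the gap.
-/

open Finset

noncomputable def fmax {α : Type*} [Fintype α] [Nonempty α] (f : α → ℝ) : ℝ :=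
  Finset.univ.sup' Finset.univ_nonempty f

section fmax

variable {α : Type*} [Fintype α] [Nonempty α]

lemma le_fmax (f : α → ℝ) (a : α) : f a ≤ fmax f :=
  le_sup' f (mem_univ a)

lemma fmax_le {f : α → ℝ} {c : ℝ} (h : ∀ a, f a ≤ c) : fmax f ≤ c :=
  sup'_le _ _ fun a _ => h a

lemma fmax_const (c : ℝ) : fmax (fun _ : α => c) = c :=
  sup'_const _ c

lemma fmax_abs_nonneg (f : α → ℝ) : 0 ≤ fmax (fun a => |f a|) :=
  (abs_nonneg _).trans (le_fmax (fun a => |f a|) (Classical.arbitrary α))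

lemma fmax_sub_fmax_le {f g : α → ℝ} {c : ℝ} (h : ∀ a, f a - g a ≤ c) :
    fmax f - fmax g ≤ c :=
  sub_le_iff_le_add.2 <| fmax_le fun a => by linarith [h a, le_fmax g a]

lemma abs_fmax_sub_fmax_le {f g : α → ℝ} {c : ℝ} (h : ∀ a, |f a - g a| ≤ c) :
    |fmax f - fmax g| ≤ c :=
  abs_sub_le_iff.2
    ⟨fmax_sub_fmax_le fun a => (abs_sub_le_iff.1 (h a)).1,
      fmax_sub_fmax_le fun a => (abs_sub_le_iff.1 (h a)).2⟩

lemma abs_fmax_le {f : α → ℝ} {c : ℝ} (h : ∀ a, |f a| ≤ c) : |fmax f| ≤ c := by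
  have := abs_fmax_sub_fmax_le (g := fun _ => 0) fun a => (sub_zero (f a)).symm ▸ h a
  rwa [fmax_const, sub_zero] at this

end fmax

section backup

variable {ι : Type*} [Fintype ι]

lemma abs_sum_mul_le {w v : ι → ℝ} {c : ℝ} (hv : ∀ i, |v i| ≤ c) :
    |∑ i, w i * v i| ≤ (∑ i, |w i|) * c :=
  calc |∑ i, w i * v i|
      ≤ ∑ i, |w i * v i| := abs_sum_le_sum_abs _ _
    _ ≤ ∑ i, |w i| * c := sum_le_sum fun i _ => by
        rw [abs_mul]
        exact mul_le_mul_of_nonneg_left (hv i) (abs_nonneg _)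
    _ = (∑ i, |w i|) * c := (sum_mul _ _ _).symm

lemma abs_add_sum_mul_sub_add_sum_mul_le {a₁ a₂ M D : ℝ} {p₁ p₂ V₁ V₂ : ι → ℝ}
    (hp₂ : ∀ i, 0 ≤ p₂ i) (hV₁ : ∀ i, |V₁ i| ≤ M) (hV : ∀ i, |V₁ i - V₂ i| ≤ D) :
    |(a₁ + ∑ i, p₁ i * V₁ i) - (a₂ + ∑ i, p₂ i * V₂ i)|
      ≤ |a₁ - a₂| + (∑ i, |p₁ i - p₂ i|) * M + (∑ i, p₂ i) * D := by
  have hsplit : (a₁ + ∑ i, p₁ i * V₁ i) - (a₂ + ∑ i, p₂ i * V₂ i)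
      = (a₁ - a₂) + ∑ i, (p₁ i - p₂ i) * V₁ i + ∑ i, p₂ i * (V₁ i - V₂ i) := by
    simp only [sub_mul, mul_sub, sum_sub_distrib]
    ring
  have hp₂_abs : ∑ i, |p₂ i| = ∑ i, p₂ i := sum_congr rfl fun i _ => abs_of_nonneg (hp₂ i)
  rw [hsplit]
  calc |(a₁ - a₂) + ∑ i, (p₁ i - p₂ i) * V₁ i + ∑ i, p₂ i * (V₁ i - V₂ i)|
      ≤ |a₁ - a₂| + |∑ i, (p₁ i - p₂ i) * V₁ i| + |∑ i, p₂ i * (V₁ i - V₂ i)| :=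
        (abs_add_le _ _).trans (add_le_add_left (abs_add_le _ _) _)
    _ ≤ |a₁ - a₂| + (∑ i, |p₁ i - p₂ i|) * M + (∑ i, p₂ i) * D := by
        gcongr
        · exact abs_sum_mul_le hV₁
        · exact hp₂_abs ▸ abs_sum_mul_le hV

end backup

theorem optimal_value_gap_bound_general {S O : Type*} [Fintype S] [Fintype O] [Nonempty S] [Nonempty O]
    (r₁ r₂ : S → O → ℝ) (p₁ p₂ : S → O → S → ℝ) (γbar₂ κ : ℝ)
    (hp₂ : ∀ s o s', 0 ≤ p₂ s o s')
    (hγ₂ : γbar₂ = fmax (fun so : S × O => ∑ s' : S, p₂ so.1 so.2 s'))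
    (hγ₂lt : γbar₂ < 1)
    (hκ : κ = fmax (fun so : S × O => ∑ s' : S, |p₁ so.1 so.2 s' - p₂ so.1 so.2 s'|))
    (Q₁ Q₂ : S → O → ℝ)
    (hQ₁ : ∀ s o, Q₁ s o = r₁ s o + ∑ s' : S, p₁ s o s' * fmax (fun o' => Q₁ s' o'))
    (hQ₂ : ∀ s o, Q₂ s o = r₂ s o + ∑ s' : S, p₂ s o s' * fmax (fun o' => Q₂ s' o')) :
    fmax (fun so : S × O => |Q₁ so.1 so.2 - Q₂ so.1 so.2|) ≤
      (1 - γbar₂)⁻¹ *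
        (fmax (fun so : S × O => |r₁ so.1 so.2 - r₂ so.1 so.2|) +
          κ * fmax (fun so : S × O => |Q₁ so.1 so.2|)) := by
  set D := fmax (fun so : S × O => |Q₁ so.1 so.2 - Q₂ so.1 so.2|)
  set R := fmax (fun so : S × O => |r₁ so.1 so.2 - r₂ so.1 so.2|)
  set M := fmax (fun so : S × O => |Q₁ so.1 so.2|)
  have hgap : D ≤ R + κ * M + γbar₂ * D := fmax_le fun ⟨s, o⟩ => by
    have hV₁ (s' : S) : |fmax (Q₁ s')| ≤ M :=
      abs_fmax_le fun o' => le_fmax (fun so : S × O => |Q₁ so.1 so.2|) (s', o')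
    have hV (s' : S) : |fmax (Q₁ s') - fmax (Q₂ s')| ≤ D :=
      abs_fmax_sub_fmax_le fun o' =>
        le_fmax (fun so : S × O => |Q₁ so.1 so.2 - Q₂ so.1 so.2|) (s', o')
    refine (hQ₁ s o ▸ hQ₂ s o ▸ abs_add_sum_mul_sub_add_sum_mul_le (hp₂ s o) hV₁ hV).trans ?_
    gcongr
    · exact le_fmax (fun so : S × O => |r₁ so.1 so.2 - r₂ so.1 so.2|) (s, o)
    · exact fmax_abs_nonneg _
    · exact hκ ▸ le_fmax (fun so : S × O => ∑ s', |p₁ so.1 so.2 s' - p₂ so.1 so.2 s'|) (s, o)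
    · exact fmax_abs_nonneg _
    · exact hγ₂ ▸ le_fmax (fun so : S × O => ∑ s', p₂ so.1 so.2 s') (s, o)
  rw [le_inv_mul_iff₀ (sub_pos.2 hγ₂lt)]
  linarith

/-- Term-1 bound in the proof of Theorem 1: the gap between the optimal option value
functions of two SMDP models is controlled by the reward error and the
total-variation error of the transition models. -/
theorem optimal_value_gap_bound {S O : Type*} [Fintype S] [Fintype O] [Nonempty S] [Nonempty O]
    (r₁ r₂ : S → O → ℝ) (p₁ p₂ : S → O → S → ℝ) (γbar₂ κ : ℝ)
    (hp₁ : ∀ s o s', 0 ≤ p₁ s o s') (hp₂ : ∀ s o s', 0 ≤ p₂ s o s')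
    (hγ₂ : γbar₂ = fmax (fun so : S × O => ∑ s' : S, p₂ so.1 so.2 s'))
    (hγ₂lt : γbar₂ < 1)
    (hκ : κ = fmax (fun so : S × O => ∑ s' : S, |p₁ so.1 so.2 s' - p₂ so.1 so.2 s'|))
    (Q₁ Q₂ : S → O → ℝ)
    (hQ₁ : ∀ s o, Q₁ s o = r₁ s o + ∑ s' : S, p₁ s o s' * fmax (fun o' => Q₁ s' o'))
    (hQ₂ : ∀ s o, Q₂ s o = r₂ s o + ∑ s' : S, p₂ s o s' * fmax (fun o' => Q₂ s' o')) :
    fmax (fun so : S × O => |Q₁ so.1 so.2 - Q₂ so.1 so.2|) ≤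
      (1 - γbar₂)⁻¹ *
        (fmax (fun so : S × O => |r₁ so.1 so.2 - r₂ so.1 so.2|) +
          κ * fmax (fun so : S × O => |Q₁ so.1 so.2|)) :=
  optimal_value_gap_bound_general r₁ r₂ p₁ p₂ γbar₂ κ hp₂ hγ₂ hγ₂lt hκ Q₁ Q₂ hQ₁ hQ₂
end

section
/- Let S and O be finite nonempty sets和. Let M = (r,p) and M_I = (r,p_I) be two SMDP models over (S,O) with the same reward function r satisfying 0 ≤ r(s,o) ≤ Rmax, with ∑_{s'} p(s,o,s') ≤ γ̄ and ∑_{s'} p_I(s,o,s') ≤ γ̄ for all (s,o) where γ̄ < 1, and with max_{s,o} ∑_{s'} |p(s,o,s') − p_I(s,o,s')| ≤ γ̄ · ζ. Let Q* and Q*_I be Bellman-optimal value functions for M and M_I, let π_I : S → O be greedy with respect to Q*_I, let V^{π_I} be the value of π_I in M, and let V*(s) = max_o Q*(s,o). Then ‖V^{π_I} − V*‖_∞ ≤ 2ζ · γ̄ · Rmax / (1 − γ̄)². -/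
/-! Both `V^{π_I}` and `V*` are compared with `V_I := max_o Q*_I`, the optimal value of the
intent model, which is also the value of `π_I` in that model. For `V ∈ {V^{π_I}, V*}`, one
Bellman step in each model gives `‖V - V_I‖ ≤ γ̄ ‖V - V_I‖ + γ̄ ζ ‖V_I‖`: the kernel `p`
contracts the difference, and the kernel error `p - p_I` acts on `V_I`, whose norm is at most
`Rmax / (1 - γ̄)`. Hence each distance is at most `γ̄ ζ Rmax / (1 - γ̄)²`, and the triangle
inequality doubles it. -/

open Finset

section fmax

variable {α : Type*} [Fintype α] [Nonempty α]

lemma fmax_abs_eq_norm (f : α → ℝ) : fmax (fun a => |f a|) = ‖f‖ := by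
  simp only [← Real.norm_eq_abs]
  refine le_antisymm (fmax_le fun a => norm_le_pi_norm f a) ?_
  exact (pi_norm_le_iff_of_nonempty f).2 fun a => le_fmax (fun a => ‖f a‖) a

lemma fmax_le_fmax_add {f g : α → ℝ} {c : ℝ} (h : ∀ a, f a ≤ g a + c) :
    fmax f ≤ fmax g + c :=
  fmax_le fun a => (h a).trans (by gcongr; exact le_fmax g a)

end fmax

section Kernel

variable {S : Type*} [Fintype S]

lemma abs_sum_mul_le_s5 (a X : S → ℝ) : |∑ s, a s * X s| ≤ (∑ s, |a s|) * ‖X‖ :=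
  calc |∑ s, a s * X s| ≤ ∑ s, |a s * X s| := abs_sum_le_sum_abs _ _
    _ ≤ ∑ s, |a s| * ‖X‖ := sum_le_sum fun s _ => by
        rw [abs_mul, ← Real.norm_eq_abs (X s)]
        exact mul_le_mul_of_nonneg_left (norm_le_pi_norm X s) (abs_nonneg _)
    _ = (∑ s, |a s|) * ‖X‖ := (sum_mul ..).symm

lemma abs_sum_mul_le_of_sum_le {q : S → ℝ} {γ : ℝ} (hq : ∀ s, 0 ≤ q s) (hqγ : ∑ s, q s ≤ γ)
    (X : S → ℝ) : |∑ s, q s * X s| ≤ γ * ‖X‖ := by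
  have h := abs_sum_mul_le_s5 q X
  simp only [abs_of_nonneg (hq _)] at h
  exact h.trans (mul_le_mul_of_nonneg_right hqγ (norm_nonneg X))

lemma abs_sum_mul_sub_sum_mul_le {q q' : S → ℝ} {γ ε : ℝ} (hq : ∀ s, 0 ≤ q s)
    (hqγ : ∑ s, q s ≤ γ) (hqε : ∑ s, |q s - q' s| ≤ ε) (X Y : S → ℝ) :
    |∑ s, q s * X s - ∑ s, q' s * Y s| ≤ γ * ‖X - Y‖ + ε * ‖Y‖ := by
  have hsplit : ∑ s, q s * X s - ∑ s, q' s * Y s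
      = ∑ s, q s * (X - Y) s + ∑ s, (q s - q' s) * Y s := by
    simp only [Pi.sub_apply, mul_sub, sub_mul, sum_sub_distrib]
    ring
  rw [hsplit]
  calc _ ≤ |∑ s, q s * (X - Y) s| + |∑ s, (q s - q' s) * Y s| := abs_add_le _ _
    _ ≤ γ * ‖X - Y‖ + ε * ‖Y‖ := by
      gcongr
      · exact abs_sum_mul_le_of_sum_le hq hqγ _
      · exact (abs_sum_mul_le_s5 _ Y).trans (mul_le_mul_of_nonneg_right hqε (norm_nonneg Y))

variable [Nonempty S]

lemma norm_le_div_of_forall_abs_le {V : S → ℝ} {γ c : ℝ} (hγ : γ < 1)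
    (h : ∀ s, |V s| ≤ γ * ‖V‖ + c) : ‖V‖ ≤ c / (1 - γ) := by
  have hV : ‖V‖ ≤ γ * ‖V‖ + c := (pi_norm_le_iff_of_nonempty V).2 h
  rw [le_div_iff₀ (sub_pos.2 hγ)]
  linarith

variable {γ ε : ℝ}

lemma norm_value_le {P : S → S → ℝ} {R V : S → ℝ} {Rmax : ℝ} (hP : ∀ s s', 0 ≤ P s s')
    (hPγ : ∀ s, ∑ s', P s s' ≤ γ) (hγ : γ < 1) (hR : ∀ s, |R s| ≤ Rmax)
    (hV : ∀ s, V s = R s + ∑ s', P s s' * V s') : ‖V‖ ≤ Rmax / (1 - γ) :=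
  norm_le_div_of_forall_abs_le hγ fun s => by
    rw [hV s]
    linarith [abs_add_le (R s) (∑ s', P s s' * V s'), hR s,
      abs_sum_mul_le_of_sum_le (hP s) (hPγ s) V]

lemma norm_sub_value_le {P P' : S → S → ℝ} {R V W : S → ℝ} (hP : ∀ s s', 0 ≤ P s s')
    (hPγ : ∀ s, ∑ s', P s s' ≤ γ) (hPε : ∀ s, ∑ s', |P s s' - P' s s'| ≤ ε) (hγ : γ < 1)
    (hV : ∀ s, V s = R s + ∑ s', P s s' * V s')
    (hW : ∀ s, W s = R s + ∑ s', P' s s' * W s') : ‖V - W‖ ≤ ε * ‖W‖ / (1 - γ) :=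
  norm_le_div_of_forall_abs_le hγ fun s => by
    rw [Pi.sub_apply, hV s, hW s, add_sub_add_left_eq_sub]
    exact abs_sum_mul_sub_sum_mul_le (hP s) (hPγ s) (hPε s) V W

lemma norm_sub_optimal_value_le {O : Type*} [Fintype O] [Nonempty O]
    {R : S → O → ℝ} {P P' : S → O → S → ℝ} {Q Q' : S → O → ℝ} {V W : S → ℝ}
    (hP : ∀ s o s', 0 ≤ P s o s') (hPγ : ∀ s o, ∑ s', P s o s' ≤ γ)
    (hPε : ∀ s o, ∑ s', |P s o s' - P' s o s'| ≤ ε) (hγ : γ < 1)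
    (hV : ∀ s, V s = fmax (Q s)) (hW : ∀ s, W s = fmax (Q' s))
    (hQ : ∀ s o, Q s o = R s o + ∑ s', P s o s' * V s')
    (hQ' : ∀ s o, Q' s o = R s o + ∑ s', P' s o s' * W s') : ‖V - W‖ ≤ ε * ‖W‖ / (1 - γ) :=
  norm_le_div_of_forall_abs_le hγ fun s => by
    rw [Pi.sub_apply, hV s, hW s]
    refine abs_fmax_sub_fmax_le fun o => ?_
    rw [hQ s o, hQ' s o, add_sub_add_left_eq_sub]
    exact abs_sum_mul_sub_sum_mul_le (hP s o) (hPγ s o) (hPε s o) V W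

end Kernel

/-- Corollary 1 (multi-time-model-of-intent value loss): with known rewards and
discounted total-variation error at most `γ̄ · ζ`, the value loss is at most
`2 ζ γ̄ Rmax / (1 - γ̄)²`. -/
theorem mtm_value_loss_bound {S O : Type*} [Fintype S] [Fintype O] [Nonempty S] [Nonempty O]
    (r : S → O → ℝ) (p pI : S → O → S → ℝ) (Rmax γbar ζ : ℝ)
    (hr0 : ∀ s o, 0 ≤ r s o) (hrR : ∀ s o, r s o ≤ Rmax)
    (hp : ∀ s o s', 0 ≤ p s o s') (hpI : ∀ s o s', 0 ≤ pI s o s')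
    (hγp : ∀ s o, ∑ s' : S, p s o s' ≤ γbar)
    (hγpI : ∀ s o, ∑ s' : S, pI s o s' ≤ γbar)
    (hγlt : γbar < 1)
    (hζ : fmax (fun so : S × O => ∑ s' : S, |p so.1 so.2 s' - pI so.1 so.2 s'|) ≤ γbar * ζ)
    (Qstar QI : S → O → ℝ)
    (hQstar : ∀ s o, Qstar s o = r s o + ∑ s' : S, p s o s' * fmax (fun o' => Qstar s' o'))
    (hQI : ∀ s o, QI s o = r s o + ∑ s' : S, pI s o s' * fmax (fun o' => QI s' o'))
    (πI : S → O)
    (hgreedy : ∀ s, QI s (πI s) = fmax (fun o => QI s o))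
    (VπI : S → ℝ)
    (hVπI : ∀ s, VπI s = r s (πI s) + ∑ s' : S, p s (πI s) s' * VπI s')
    (Vstar : S → ℝ)
    (hVstar : ∀ s, Vstar s = fmax (fun o => Qstar s o)) :
    fmax (fun s : S => |VπI s - Vstar s|) ≤
      2 * ζ * γbar * Rmax / (1 - γbar) ^ 2 := by
  obtain ⟨s₀⟩ := ‹Nonempty S›
  obtain ⟨o₀⟩ := ‹Nonempty O›
  let VI : S → ℝ := fun s => fmax (QI s)
  have hTV : ∀ s o, ∑ s', |p s o s' - pI s o s'| ≤ γbar * ζ := fun s o =>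
    (le_fmax (fun so : S × O => ∑ s', |p so.1 so.2 s' - pI so.1 so.2 s'|) (s, o)).trans hζ
  have hε : 0 ≤ γbar * ζ := (sum_nonneg fun s' _ => abs_nonneg _).trans (hTV s₀ o₀)
  have hVIπ : ∀ s, VI s = r s (πI s) + ∑ s', pI s (πI s) s' * VI s' := fun s =>
    (hgreedy s).symm.trans (hQI s (πI s))
  have hVI : ‖VI‖ ≤ Rmax / (1 - γbar) :=
    norm_value_le (fun s => hpI s (πI s)) (fun s => hγpI s (πI s)) hγlt
      (fun s => abs_le.2 ⟨by linarith [hr0 s (πI s), hrR s (πI s)], hrR s (πI s)⟩) hVIπ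
  have hπ : ‖VπI - VI‖ ≤ γbar * ζ * ‖VI‖ / (1 - γbar) :=
    norm_sub_value_le (fun s => hp s (πI s)) (fun s => hγp s (πI s)) (fun s => hTV s (πI s))
      hγlt hVπI hVIπ
  have hstar : ‖Vstar - VI‖ ≤ γbar * ζ * ‖VI‖ / (1 - γbar) :=
    norm_sub_optimal_value_le hp hγp hTV hγlt hVstar (fun _ => rfl)
      (fun s o => by simp only [hQstar s o, hVstar]) hQI
  have h1γ : 0 < 1 - γbar := sub_pos.2 hγlt
  calc fmax (fun s => |VπI s - Vstar s|) = ‖VπI - Vstar‖ := fmax_abs_eq_norm _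
    _ ≤ ‖VπI - VI‖ + ‖Vstar - VI‖ := by
      simpa only [dist_eq_norm] using dist_triangle_right VπI Vstar VI
    _ ≤ 2 * (γbar * ζ * (Rmax / (1 - γbar)) / (1 - γbar)) := by
      have := div_le_div_of_nonneg_right (mul_le_mul_of_nonneg_left hVI hε) h1γ.le
      linarith
    _ = 2 * ζ * γbar * Rmax / (1 - γbar) ^ 2 := by field_simp
end

section
/- Let S and O be finite nonempty sets, M_I = (r_I,p_I) an SMDP model over (S,O), and M̂ = (r̂,p̂) an SMDP model over (S,O) with γ̄̂ := max_{s,o} ∑_{s'} p̂(s,o,s') < 1. Let π*, π̂* : S → O be deterministic policies; for each π ∈ {π*, π̂*} let V^π_{M_I} and V^π_{M̂} denote the values of π in M_I and M̂. Assume V^{π̂*}_{M_I}(s) ≤ V^{π*}_{M_I}(s) and V^{π*}_{M̂}(s) ≤ V^{π̂*}_{M̂}(s) for all s (π* optimal in M_I and π̂* optimal in M̂ over the pair). If, for some t ≥ 0 and for every π ∈ {π*, π̂*} and every s ∈ S, | r̂(s,π(s)) + ∑_{s'} p̂(s,π(s),s') · V^π_{M_I}(s') − V^π_{M_I}(s)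 | ≤ t, then ‖V^{π*}_{M_I} − V^{π̂*}_{M_I}‖_∞ ≤ 2t / (1 − γ̄̂). -/
section PolicyEvaluation

variable {S : Type*} [Fintype S] {P : S → S → ℝ} {γ : ℝ}

lemma abs_kernel_sum_le (hP : ∀ s s', 0 ≤ P s s') (hγ : ∀ s, ∑ s', P s s' ≤ γ)
    (f : S → ℝ) (s : S) : |∑ s', P s s' * f s'| ≤ γ * ‖f‖ :=
  calc |∑ s', P s s' * f s'| ≤ ∑ s', P s s' * ‖f‖ := by
        refine (Finset.abs_sum_le_sum_abs _ _).trans (Finset.sum_le_sum fun s' _ => ?_)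
        rw [abs_mul, abs_of_nonneg (hP s s')]
        exact mul_le_mul_of_nonneg_left (norm_le_pi_norm f s') (hP s s')
    _ ≤ γ * ‖f‖ := by
        rw [← Finset.sum_mul]
        exact mul_le_mul_of_nonneg_right (hγ s) (norm_nonneg f)

theorem norm_sub_le_of_bellman_residual_le [Nonempty S] (hP : ∀ s s', 0 ≤ P s s')
    (hγ : ∀ s, ∑ s', P s s' ≤ γ) (hγ1 : γ < 1) {r V W : S → ℝ} {t : ℝ}
    (hV : ∀ s, V s = r s + ∑ s', P s s' * V s')
    (hW : ∀ s, |r s + ∑ s', P s s' * W s' - W s| ≤ t) :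
    ‖V - W‖ ≤ t / (1 - γ) := by
  have hstep : ‖V - W‖ ≤ γ * ‖V - W‖ + t := by
    refine (pi_norm_le_iff_of_nonempty _).2 fun s => ?_
    have hdecomp : (V - W) s =
        ∑ s', P s s' * (V - W) s' + (r s + ∑ s', P s s' * W s' - W s) := by
      simp only [Pi.sub_apply, mul_sub, Finset.sum_sub_distrib]
      rw [hV s]
      ring
    rw [hdecomp, Real.norm_eq_abs]
    exact (abs_add_le _ _).trans (add_le_add (abs_kernel_sum_le hP hγ _ s) (hW s))
  rw [le_div_iff₀ (sub_pos.2 hγ1)]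
  linear_combination hstep

end PolicyEvaluation

theorem planning_loss_residual_bound_general {S O : Type*} [Fintype S] [Fintype O] [Nonempty S] [Nonempty O]
    (rhat : S → O → ℝ) (phat : S → O → S → ℝ) (γhat : ℝ)
    (hphat : ∀ s o s', 0 ≤ phat s o s')
    (hγ : γhat = fmax (fun so : S × O => ∑ s' : S, phat so.1 so.2 s'))
    (hγlt : γhat < 1)
    (πstar πhat : S → O)
    (VstarMI VhatMI VstarMhat VhatMhat : S → ℝ)
    (hVstarMhat : ∀ s, VstarMhat s =
      rhat s (πstar s) + ∑ s' : S, phat s (πstar s) s' * VstarMhat s')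
    (hVhatMhat : ∀ s, VhatMhat s =
      rhat s (πhat s) + ∑ s' : S, phat s (πhat s) s' * VhatMhat s')
    (hopt : ∀ s, VhatMI s ≤ VstarMI s)
    (hopthat : ∀ s, VstarMhat s ≤ VhatMhat s)
    (t : ℝ)
    (hres_star : ∀ s,
      |rhat s (πstar s) + (∑ s' : S, phat s (πstar s) s' * VstarMI s') - VstarMI s| ≤ t)
    (hres_hat : ∀ s,
      |rhat s (πhat s) + (∑ s' : S, phat s (πhat s) s' * VhatMI s') - VhatMI s| ≤ t) :
    fmax (fun s : S => |VstarMI s - VhatMI s|) ≤ 2 * t / (1 - γhat) := by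
  have hrow (π : S → O) (s : S) : ∑ s', phat s (π s) s' ≤ γhat :=
    hγ ▸ Finset.le_sup' (fun so : S × O => ∑ s', phat so.1 so.2 s') (Finset.mem_univ (s, π s))
  have hstar (s : S) : |VstarMhat s - VstarMI s| ≤ t / (1 - γhat) :=
    (norm_le_pi_norm (VstarMhat - VstarMI) s).trans <| norm_sub_le_of_bellman_residual_le
      (fun s s' => hphat s (πstar s) s') (hrow πstar) hγlt hVstarMhat hres_star
  have hhat (s : S) : |VhatMhat s - VhatMI s| ≤ t / (1 - γhat) :=
    (norm_le_pi_norm (VhatMhat - VhatMI) s).trans <| norm_sub_le_of_bellman_residual_le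
      (fun s s' => hphat s (πhat s) s') (hrow πhat) hγlt hVhatMhat hres_hat
  refine Finset.sup'_le _ _ fun s _ => ?_
  rw [abs_of_nonneg (sub_nonneg.2 (hopt s)), mul_div_assoc]
  linarith [(abs_le.1 (hstar s)).1, (abs_le.1 (hhat s)).2, hopthat s]

/-- Lemma 4 (deterministic content): if the approximate SMDP's Bellman backups of the
true values have residual at most `t` on the relevant policies, the planning loss in
the intent-induced SMDP is at most `2t / (1 - γ̄̂)`. -/
theorem planning_loss_residual_bound {S O : Type*} [Fintype S] [Fintype O] [Nonempty S] [Nonempty O]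
    (rI rhat : S → O → ℝ) (pI phat : S → O → S → ℝ) (γhat : ℝ)
    (hpI : ∀ s o s', 0 ≤ pI s o s') (hphat : ∀ s o s', 0 ≤ phat s o s')
    (hγ : γhat = fmax (fun so : S × O => ∑ s' : S, phat so.1 so.2 s'))
    (hγlt : γhat < 1)
    (πstar πhat : S → O)
    (VstarMI VhatMI VstarMhat VhatMhat : S → ℝ)
    (hVstarMI : ∀ s, VstarMI s = rI s (πstar s) + ∑ s' : S, pI s (πstar s) s' * VstarMI s')
    (hVhatMI : ∀ s, VhatMI s = rI s (πhat s) + ∑ s' : S, pI s (πhat s) s' * VhatMI s')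
    (hVstarMhat : ∀ s, VstarMhat s =
      rhat s (πstar s) + ∑ s' : S, phat s (πstar s) s' * VstarMhat s')
    (hVhatMhat : ∀ s, VhatMhat s =
      rhat s (πhat s) + ∑ s' : S, phat s (πhat s) s' * VhatMhat s')
    (hopt : ∀ s, VhatMI s ≤ VstarMI s)
    (hopthat : ∀ s, VstarMhat s ≤ VhatMhat s)
    (t : ℝ) (ht : 0 ≤ t)
    (hres_star : ∀ s,
      |rhat s (πstar s) + (∑ s' : S, phat s (πstar s) s' * VstarMI s') - VstarMI s| ≤ t)
    (hres_hat : ∀ s,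
      |rhat s (πhat s) + (∑ s' : S, phat s (πhat s) s' * VhatMI s') - VhatMI s| ≤ t) :
    fmax (fun s : S => |VstarMI s - VhatMI s|) ≤ 2 * t / (1 - γhat) :=
  planning_loss_residual_bound_general rhat phat γhat hphat hγ hγlt πstar πhat VstarMI VhatMI
    VstarMhat VhatMhat hVstarMhat hVhatMhat hopt hopthat t hres_star hres_hat
end
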